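/- arXiv:2109.07562 — 3 statements merged into one kernel-verified Lean document; each statement's English description precedes it below -/
import Mathlib

section
/- Let x, y : (0,∞) → ℝ be nonnegative C¹ solutions of x' = −(3/2)x² − (1/6)x·y and y' = −(1/2)y² − (1/2)x·y. Then both x and y are nonincreasing, and moreover t·x(t) ≤ 2/3 and t·y(t) ≤ 2 for all t ≥ t₀ whenever these bounds hold at t₀. -/
open Set

lemma ode_aux (z : ℝ → ℝ) (c : ℝ) (hc : 0 < c)
    (hz0 : ∀ t ∈ Ioi (0:ℝ), 0 ≤ z t)
    (hz : ∀ t ∈ Ioi (0:ℝ), ∃ d, HasDerivAt z d t ∧ d ≤ -c * z t ^ 2) :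
    AntitoneOn z (Ioi 0) ∧
    (∀ t₀ ∈ Ioi (0:ℝ), t₀ * z t₀ ≤ 1/c → ∀ t, t₀ ≤ t → t * z t ≤ 1/c) := by
  have hanti : AntitoneOn z (Ioi 0) := by
    apply antitoneOn_of_deriv_nonpos (convex_Ioi 0)
    · intro t ht
      obtain ⟨d, hd, _⟩ := hz t ht
      exact hd.continuousAt.continuousWithinAt
    · rw [interior_Ioi]
      intro t ht
      obtain ⟨d, hd, _⟩ := hz t ht
      exact hd.differentiableAt.differentiableWithinAt
    · rw [interior_Ioi]
      intro t ht
      obtain ⟨d, hd, hdle⟩ := hz t ht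
      rw [hd.deriv]
      have : 0 ≤ c * z t ^ 2 := mul_nonneg hc.le (sq_nonneg _)
      linarith
  refine ⟨hanti, ?_⟩
  intro t₀ ht₀ hb t htt
  have ht : (0:ℝ) < t := lt_of_lt_of_le ht₀ htt
  rcases eq_or_lt_of_le (hz0 t ht) with hz0t | hz0t
  · rw [← hz0t, mul_zero]
    positivity
  · -- z > 0 on [t₀, t]
    have hpos : ∀ s ∈ Icc t₀ t, 0 < z s := by
      intro s hs
      have hs0 : (0:ℝ) < s := lt_of_lt_of_le ht₀ hs.1
      exact lt_of_lt_of_le hz0t (hanti hs0 ht hs.2)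
    have hzt₀ : 0 < z t₀ := hpos t₀ ⟨le_refl _, htt⟩
    -- monotone g := (z)⁻¹ - c*s on Icc t₀ t
    have hgmono : MonotoneOn (fun s => (z s)⁻¹ - c * s) (Icc t₀ t) := by
      apply monotoneOn_of_deriv_nonneg (convex_Icc t₀ t)
      · intro s hs
        obtain ⟨d, hd, _⟩ := hz s (lt_of_lt_of_le ht₀ hs.1)
        exact ((hd.inv (hpos s hs).ne').sub ((hasDerivAt_id s).const_mul c)).continuousAt.continuousWithinAt
      · rw [interior_Icc]
        intro s hs
        have hs' : s ∈ Icc t₀ t := ⟨hs.1.le, hs.2.le⟩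
        obtain ⟨d, hd, _⟩ := hz s (lt_of_lt_of_le ht₀ hs'.1)
        exact ((hd.inv (hpos s hs').ne').sub ((hasDerivAt_id s).const_mul c)).differentiableAt.differentiableWithinAt
      · rw [interior_Icc]
        intro s hs
        have hs' : s ∈ Icc t₀ t := ⟨hs.1.le, hs.2.le⟩
        obtain ⟨d, hd, hdle⟩ := hz s (lt_of_lt_of_le ht₀ hs'.1)
        have hzs := hpos s hs'
        have hderiv : HasDerivAt (fun s => (z s)⁻¹ - c * s) (-d / z s ^ 2 - c * 1) s :=
          (hd.inv hzs.ne').sub ((hasDerivAt_id s).const_mul c)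
        rw [hderiv.deriv]
        have hsq : 0 < z s ^ 2 := by positivity
        rw [sub_nonneg, mul_one, le_div_iff₀ hsq]
        linarith
    have key := hgmono ⟨le_refl _, htt⟩ ⟨htt, le_refl _⟩ htt
    simp only at key
    -- (z t₀)⁻¹ ≥ c * t₀
    have hb' : c * t₀ * z t₀ ≤ 1 := by
      have h := (le_div_iff₀ hc).mp hb
      nlinarith
    have h1 : c * t₀ ≤ (z t₀)⁻¹ := by
      rw [← one_div, le_div_iff₀ hzt₀]
      linarith
    have h2 : c * t ≤ (z t)⁻¹ := by linarith
    rw [← one_div] at *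
    rw [le_div_iff₀ hc]
    nlinarith [mul_le_mul_of_nonneg_right h2 hz0t.le, inv_mul_cancel₀ hz0t.ne']


/-- Nonnegative C¹ solutions of `x' = −(3/2)x² − (1/6)xy`, `y' = −(1/2)y² − (1/2)xy` on
`(0,∞)` are nonincreasing, and the bounds `t·x(t) ≤ 2/3` and `t·y(t) ≤ 2` persist forward
in time from any `t₀` where they hold. -/
theorem ode_system_monotone_and_bounds (x y : ℝ → ℝ)
    (hx0 : ∀ t ∈ Ioi (0:ℝ), 0 ≤ x t) (hy0 : ∀ t ∈ Ioi (0:ℝ), 0 ≤ y t)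
    (hx : ∀ t ∈ Ioi (0:ℝ),
      HasDerivAt x (-(3/2) * (x t) ^ 2 - (1/6) * x t * y t) t)
    (hy : ∀ t ∈ Ioi (0:ℝ),
      HasDerivAt y (-(1/2) * (y t) ^ 2 - (1/2) * x t * y t) t) :
    (∀ s ∈ Ioi (0:ℝ), ∀ t, s ≤ t → x t ≤ x s ∧ y t ≤ y s) ∧
    (∀ t₀ ∈ Ioi (0:ℝ), t₀ * x t₀ ≤ 2/3 → ∀ t, t₀ ≤ t → t * x t ≤ 2/3) ∧
    (∀ t₀ ∈ Ioi (0:ℝ), t₀ * y t₀ ≤ 2 → ∀ t, t₀ ≤ t → t * y t ≤ 2) := by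
  have hxa := ode_aux x (3/2) (by norm_num) hx0 (fun t ht => ⟨_, hx t ht,
    by nlinarith [hx0 t ht, hy0 t ht]⟩)
  have hya := ode_aux y (1/2) (by norm_num) hy0 (fun t ht => ⟨_, hy t ht,
    by nlinarith [hx0 t ht, hy0 t ht]⟩)
  have e1 : (1:ℝ)/(3/2) = 2/3 := by norm_num
  have e2 : (1:ℝ)/(1/2) = 2 := by norm_num
  refine ⟨fun s hs t hst => ⟨hxa.1 hs (lt_of_lt_of_le hs hst) hst,
    hya.1 hs (lt_of_lt_of_le hs hst) hst⟩, ?_, ?_⟩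
  · intro t₀ ht₀ hb
    intro t ht
    have := hxa.2 t₀ ht₀ (by rw [e1]; exact hb) t ht; rwa [e1] at this
  · intro t₀ ht₀ hb t ht
    have := hya.2 t₀ ht₀ (by rw [e2]; exact hb) t ht; rwa [e2] at this
end

section
/- Let V be a 3-dimensional real inner product space with an alternating bilinear bracket [·,·] : V × V → V whose image lies in the span of a unit vector e₃ with [e₃, v] = 0 for all v. Define the symmetric bilinear form Q(x,y) = −2·⟨[x,eᵢ],[y,eᵢ]⟩ + ⟨[eᵢ,eⱼ],x⟩⟨[eᵢ,eⱼ],y⟩ (sums over an orthonormal basis e₁,e₂,e₃). Then Q(e₁,e₁) = Q(e₂,e₂) = −|[,]|², Q(e₃,e₃) = |[,]|², all off-diagonal entries of Q vanish, and |Q|² = 3·|[,]|⁴, where |[,]|² = Σᵢⱼ |[eᵢ,eⱼ]|². -/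
set_option maxHeartbeats 1000000


open Finset

/-- Euclidean inner product on ℝ³. -/
def ip3 (x y : Fin 3 → ℝ) : ℝ := ∑ i, x i * y i

/-- Heisenberg-type bracket with parameter `l`: `[e₁,e₂] = l·e₃`, center spanned by `e₃`. -/
def hBr (l : ℝ) (x y : Fin 3 → ℝ) : Fin 3 → ℝ :=
  fun i => if i = 2 then l * (x 0 * y 1 - x 1 * y 0) else 0

/-- The standard orthonormal basis of ℝ³. -/
def e3 (i : Fin 3) : Fin 3 → ℝ := fun j => if j = i then 1 else 0

/-- The algebraic identity (3.2): for the quadratic form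
`Q(x,y) = −2⟨[x,eᵢ],[y,eᵢ]⟩ + ⟨[eᵢ,eⱼ],x⟩⟨[eᵢ,eⱼ],y⟩`, one has
`Q(e₁,e₁) = Q(e₂,e₂) = −|[,]|²`, `Q(e₃,e₃) = |[,]|²`, the off-diagonal entries vanish,
and `|Q|² = 3|[,]|⁴`. -/
theorem Q_form_identity (l : ℝ) :
    let Q : Fin 3 → Fin 3 → ℝ := fun a b =>
      -2 * ∑ i, ip3 (hBr l (e3 a) (e3 i)) (hBr l (e3 b) (e3 i)) +
        ∑ i, ∑ j, ip3 (hBr l (e3 i) (e3 j)) (e3 a) * ip3 (hBr l (e3 i) (e3 j)) (e3 b)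
    let br2 : ℝ := ∑ i, ∑ j, ip3 (hBr l (e3 i) (e3 j)) (hBr l (e3 i) (e3 j))
    Q 0 0 = -br2 ∧ Q 1 1 = -br2 ∧ Q 2 2 = br2 ∧
      (∀ a b : Fin 3, a ≠ b → Q a b = 0) ∧
      (∑ a, ∑ b, (Q a b) ^ 2) = 3 * br2 ^ 2 := by
  intro Q br2
  have h1 : Q 0 0 = -br2 := by
    simp [Q, br2, ip3, hBr, e3, Fin.sum_univ_three]; ring
  have h2 : Q 1 1 = -br2 := by
    simp [Q, br2, ip3, hBr, e3, Fin.sum_univ_three]; ring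
  have h3 : Q 2 2 = br2 := by
    simp [Q, br2, ip3, hBr, e3, Fin.sum_univ_three]
    try ring
  have h4 : ∀ a b : Fin 3, a ≠ b → Q a b = 0 := by
    intro a b hab
    fin_cases a <;> fin_cases b <;>
      first
        | exact absurd rfl hab
        | (simp [Q, ip3, hBr, e3, Fin.sum_univ_three]; try ring)
  refine ⟨h1, h2, h3, h4, ?_⟩
  have e01 := h4 0 1 (by decide)
  have e02 := h4 0 2 (by decide)
  have e10 := h4 1 0 (by decide)
  have e12 := h4 1 2 (by decide)
  have e20 := h4 2 0 (by decide)
  have e21 := h4 2 1 (by decide)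
  rw [Fin.sum_univ_three]
  simp only [Fin.sum_univ_three, e01, e02, e10, e12, e20, e21, h1, h2, h3]
  ring
end

section
/- Let G(t) be a smooth family of inner products on a finite-dimensional vector space V, let W ⊆ V be a fixed subspace, and suppose that for every t and every v with G(t)(v, w) = 0 for all w ∈ W, one has (dG/dt)(v, w) = 0 for all w ∈ W. Then the G(t)-orthogonal complement of W is independent of t. -/
open Finset

private lemma differentiable_det_aux {n : ℕ} (M : ℝ → Matrix (Fin n) (Fin n) ℝ)
    (h : ∀ i j, Differentiable ℝ fun t => M t i j) :
    Differentiable ℝ fun t => (M t).det := by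
  have heq : (fun t => (M t).det)
      = fun t => ∑ σ : Equiv.Perm (Fin n),
          ((Equiv.Perm.sign σ : ℤ) : ℝ) * ∏ i, M t (σ i) i := by
    funext t; rw [Matrix.det_apply']
  rw [heq]
  exact Differentiable.fun_sum fun σ _ =>
    ((Differentiable.fun_finsetProd fun i _ => h (σ i) i).const_mul _)

/-- Linear-algebra lemma of Proposition 4.4(1): for a smooth family `G(t)` of inner
products on a finite-dimensional space `V` and a fixed subspace `W`, if the time
derivative of `G` vanishes on pairs `(v,w)` whenever `v ⊥_{G(t)} W` and `w ∈ W`, then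
the `G(t)`-orthogonal complement of `W` is independent of `t`. -/
theorem orthogonal_complement_time_independent
    {V : Type*} [AddCommGroup V] [Module ℝ V] [FiniteDimensional ℝ V]
    (W : Submodule ℝ V) (G G' : ℝ → V → V → ℝ)
    (hbil : ∀ t, ∀ a : ℝ, ∀ v v' w : V,
      G t (a • v + v') w = a * G t v w + G t v' w)
    (hsymm : ∀ t v w, G t v w = G t w v)
    (hposdef : ∀ t, ∀ v : V, v ≠ 0 → 0 < G t v v)
    (hderiv : ∀ v w : V, ∀ t : ℝ, HasDerivAt (fun s => G s v w) (G' t v w) t)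
    (hvanish : ∀ t : ℝ, ∀ v : V, (∀ w ∈ W, G t v w = 0) → ∀ w ∈ W, G' t v w = 0) :
    ∀ t₀ t₁ : ℝ, ∀ v : V, (∀ w ∈ W, G t₀ v w = 0) → ∀ w ∈ W, G t₁ v w = 0 := by
  classical
  -- Linearity of G in the first argument
  have hzero : ∀ t (w : V), G t 0 w = 0 := by
    intro t w
    have h := hbil t 1 0 0 w
    simp only [one_smul, add_zero, one_mul] at h
    linarith
  have hadd : ∀ t (v v' w : V), G t (v + v') w = G t v w + G t v' w := by
    intro t v v' w
    have h := hbil t 1 v v' w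
    simpa using h
  have hsmul : ∀ t (a : ℝ) (v w : V), G t (a • v) w = a * G t v w := by
    intro t a v w
    have h := hbil t a v 0 w
    simpa [hzero] using h
  have hsub : ∀ t (v v' w : V), G t (v - v') w = G t v w - G t v' w := by
    intro t v v' w
    have h := hbil t (-1) v' v w
    rw [neg_one_smul] at h
    rw [sub_eq_neg_add]
    rw [h]; ring
  have hsumG : ∀ t {m : ℕ} (f : Fin m → ℝ) (u : Fin m → V) (w : V),
      G t (∑ i, f i • u i) w = ∑ i, f i * G t (u i) w := by
    intro t m f u w
    induction (Finset.univ : Finset (Fin m)) using Finset.induction_on with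
    | empty => simp [hzero]
    | insert _ _ hx ih => rw [Finset.sum_insert hx, Finset.sum_insert hx, hadd, hsmul, ih]
  -- Linearity of G' in the first argument (by uniqueness of derivatives)
  have hzero' : ∀ t (w : V), G' t 0 w = 0 := by
    intro t w
    have h1 : HasDerivAt (fun s => G s 0 w) 0 t := by
      have heq : (fun s => G s 0 w) = fun _ => (0 : ℝ) := funext fun s => hzero s w
      rw [heq]; exact hasDerivAt_const t 0
    exact (hderiv 0 w t).unique h1
  have hadd' : ∀ t (v v' w : V), G' t (v + v') w = G' t v w + G' t v' w := by
    intro t v v' w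
    have h1 : HasDerivAt (fun s => G s (v + v') w) (G' t v w + G' t v' w) t := by
      have heq : (fun s => G s (v + v') w) = fun s => G s v w + G s v' w :=
        funext fun s => hadd s v v' w
      rw [heq]; exact (hderiv v w t).add (hderiv v' w t)
    exact (hderiv (v + v') w t).unique h1
  have hsmul' : ∀ t (a : ℝ) (v w : V), G' t (a • v) w = a * G' t v w := by
    intro t a v w
    have h1 : HasDerivAt (fun s => G s (a • v) w) (a * G' t v w) t := by
      have heq : (fun s => G s (a • v) w) = fun s => a * G s v w :=
        funext fun s => hsmul s a v w
      rw [heq]; exact (hderiv v w t).const_mul a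
    exact (hderiv (a • v) w t).unique h1
  have hsub' : ∀ t (v v' w : V), G' t (v - v') w = G' t v w - G' t v' w := by
    intro t v v' w
    have h := hadd' t (v - v') v' w
    rw [sub_add_cancel] at h
    linarith
  have hsumG' : ∀ t {m : ℕ} (f : Fin m → ℝ) (u : Fin m → V) (w : V),
      G' t (∑ i, f i • u i) w = ∑ i, f i * G' t (u i) w := by
    intro t m f u w
    induction (Finset.univ : Finset (Fin m)) using Finset.induction_on with
    | empty => simp [hzero']
    | insert _ _ hx ih => rw [Finset.sum_insert hx, Finset.sum_insert hx, hadd', hsmul', ih]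
  intro t₀ t₁ v₀ h₀ w₀ hw₀
  set n := Module.finrank ℝ W with hn
  set b : Module.Basis (Fin n) ℝ W := Module.finBasis ℝ W with hb
  set u : Fin n → V := fun i => (b i : V) with hu
  have huW : ∀ i, u i ∈ W := fun i => (b i).2
  -- reduce orthogonality to the basis vectors
  have hexpand : ∀ t (v : V), (∀ j, G t v (u j) = 0) → ∀ w ∈ W, G t v w = 0 := by
    intro t v hv w hw
    have hrepr : w = ∑ j, (b.repr ⟨w, hw⟩ j : ℝ) • u j := by
      have h1 := congrArg (Subtype.val) (b.sum_repr ⟨w, hw⟩)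
      simpa only [Submodule.coe_sum, Submodule.coe_smul] using h1.symm
    rw [hsymm, hrepr, hsumG]
    apply Finset.sum_eq_zero
    intro j _
    rw [hsymm t (u j) v, hv j, mul_zero]
  set Gram : ℝ → Matrix (Fin n) (Fin n) ℝ :=
    fun t => Matrix.of fun i j => G t (u i) (u j) with hGram
  have hGramApp : ∀ t i j, Gram t i j = G t (u i) (u j) := fun t i j => rfl
  -- the Gram matrix is invertible
  have hdet : ∀ t, (Gram t).det ≠ 0 := by
    intro t hdet0
    obtain ⟨x, hx0, hxv⟩ := Matrix.exists_mulVec_eq_zero_iff.mpr hdet0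
    set z : V := ∑ i, x i • u i with hz
    have hzne : z ≠ 0 := by
      intro hzz
      apply hx0
      have hzW : (∑ i, x i • b i : W) = 0 := by
        apply Subtype.ext
        simpa [hz] using hzz
      have := Fintype.linearIndependent_iff.mp b.linearIndependent x hzW
      funext i; exact this i
    have hGzi : ∀ i, G t (u i) z = 0 := by
      intro i
      have h1 : G t (u i) z = ∑ j, x j * G t (u j) (u i) := by
        rw [hsymm, hz, hsumG]
      have h2 : (Gram t).mulVec x i = 0 := congrFun hxv i
      rw [h1]
      rw [show (0:ℝ) = (Gram t).mulVec x i from h2.symm]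
      simp only [Matrix.mulVec, dotProduct]
      apply Finset.sum_congr rfl
      intro j _
      rw [hGramApp, hsymm t (u i) (u j)]; ring
    have hGzz : G t z z = 0 := by
      rw [hz, hsumG]
      apply Finset.sum_eq_zero
      intro i _
      rw [← hz, hGzi i, mul_zero]
    exact absurd hGzz (ne_of_gt (hposdef t z hzne))
  set rhs : ℝ → Fin n → ℝ := fun t j => G t v₀ (u j) with hrhs
  set c : ℝ → Fin n → ℝ :=
    fun t => ((Gram t).det)⁻¹ • ((Gram t).adjugate.mulVec (rhs t)) with hc
  have hGramc : ∀ t, (Gram t).mulVec (c t) = rhs t := by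
    intro t
    rw [hc]
    rw [Matrix.mulVec_smul, Matrix.mulVec_mulVec, Matrix.mul_adjugate,
      Matrix.smul_mulVec, Matrix.one_mulVec, smul_smul,
      inv_mul_cancel₀ (hdet t), one_smul]
  -- differentiability
  have hGramDiff : ∀ i j, Differentiable ℝ fun t => Gram t i j :=
    fun i j t => (hderiv (u i) (u j) t).differentiableAt
  have hdetDiff : Differentiable ℝ fun t => (Gram t).det :=
    differentiable_det_aux _ hGramDiff
  have hadjDiff : ∀ i j, Differentiable ℝ fun t => (Gram t).adjugate i j := by
    intro i j
    have heq : (fun t => (Gram t).adjugate i j)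
        = fun t => ((Gram t).updateRow j (Pi.single i 1)).det := by
      funext t; rw [Matrix.adjugate_apply]
    rw [heq]
    apply differentiable_det_aux
    intro k l
    by_cases hk : k = j
    · simp only [Matrix.updateRow_apply, hk, if_pos rfl]
      exact differentiable_const _
    · simp only [Matrix.updateRow_apply, if_neg hk]
      exact hGramDiff k l
  have hrhsDiff : ∀ j, Differentiable ℝ fun t => rhs t j :=
    fun j t => (hderiv v₀ (u j) t).differentiableAt
  have hcDiff : ∀ j, Differentiable ℝ fun t => c t j := by
    intro j
    have hform : (fun t => c t j)
        = fun t => ((Gram t).det)⁻¹ * ∑ k, (Gram t).adjugate j k * rhs t k := by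
      funext t
      simp [hc, Matrix.mulVec, dotProduct, smul_eq_mul]
    rw [hform]
    intro t
    exact ((hdetDiff t).inv (hdet t)).mul
      (DifferentiableAt.fun_sum fun k _ => ((hadjDiff j k) t).mul ((hrhsDiff k) t))
  set c' : ℝ → Fin n → ℝ := fun t j => deriv (fun s => c s j) t with hc'
  have hcDeriv : ∀ t j, HasDerivAt (fun s => c s j) (c' t j) t :=
    fun t j => ((hcDiff j) t).hasDerivAt
  -- orthogonality of the corrected vector
  have horth : ∀ t j, G t (v₀ - ∑ i, c t i • u i) (u j) = 0 := by
    intro t j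
    rw [hsub, hsumG]
    have h1 : ∑ i, c t i * G t (u i) (u j) = (Gram t).mulVec (c t) j := by
      simp only [Matrix.mulVec, dotProduct]
      apply Finset.sum_congr rfl
      intro i _
      rw [hGramApp, hsymm t (u i) (u j)]; ring
    rw [h1, hGramc]
    simp [hrhs]
  have horthW : ∀ t, ∀ w ∈ W, G t (v₀ - ∑ i, c t i • u i) w = 0 :=
    fun t => hexpand t _ (horth t)
  have hG'orth : ∀ t j, G' t v₀ (u j) - ∑ i, c t i * G' t (u i) (u j) = 0 := by
    intro t j
    have h1 := hvanish t _ (horthW t) (u j) (huW j)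
    rw [hsub', hsumG'] at h1
    exact h1
  -- differentiate the (identically zero) orthogonality relation
  have hkey : ∀ t j, ∑ i, c' t i * G t (u i) (u j) = 0 := by
    intro t j
    have hFzero : HasDerivAt
        (fun s => G s v₀ (u j) - ∑ i, c s i * G s (u i) (u j)) 0 t := by
      have heq : (fun s => G s v₀ (u j) - ∑ i, c s i * G s (u i) (u j))
          = fun _ => (0 : ℝ) := by
        funext s
        have := horth s j
        rw [hsub, hsumG] at this
        exact this
      rw [heq]; exact hasDerivAt_const t 0
    have hFderiv : HasDerivAt
        (fun s => G s v₀ (u j) - ∑ i, c s i * G s (u i) (u j))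
        (G' t v₀ (u j)
          - ∑ i, (c' t i * G t (u i) (u j) + c t i * G' t (u i) (u j))) t :=
      (hderiv v₀ (u j) t).sub
        (HasDerivAt.fun_sum fun i _ => (hcDeriv t i).mul (hderiv (u i) (u j) t))
    have h1 := hFderiv.unique hFzero
    rw [Finset.sum_add_distrib] at h1
    have h2 := hG'orth t j
    linarith
  -- hence the coefficients are constant
  have hc'zero : ∀ t j, c' t j = 0 := by
    intro t
    by_contra h
    push_neg at h
    obtain ⟨j₀, hj₀⟩ := h
    have hmv : (Gram t).mulVec (c' t) = 0 := by
      funext j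
      simp only [Matrix.mulVec, dotProduct, Pi.zero_apply]
      have := hkey t j
      rw [← this]
      apply Finset.sum_congr rfl
      intro i _
      rw [hGramApp, hsymm t (u i) (u j)]; ring
    have hne : c' t ≠ 0 := fun hcc => hj₀ (congrFun hcc j₀)
    exact hdet t (Matrix.exists_mulVec_eq_zero_iff.mp ⟨c' t, hne, hmv⟩)
  have hconst : ∀ j t, c t j = c t₀ j := by
    intro j t
    exact is_const_of_deriv_eq_zero (hcDiff j) (fun x => hc'zero x j) t t₀
  -- at t₀ the coefficients vanish
  have hrhs0 : rhs t₀ = 0 := funext fun j => h₀ (u j) (huW j)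
  have hc0 : ∀ t j, c t j = 0 := by
    intro t j
    rw [hconst j t, hc]
    simp [hrhs0]
  -- conclude
  apply hexpand t₁ v₀ _ w₀ hw₀
  intro j
  have h1 := horth t₁ j
  have h2 : (∑ i, c t₁ i • u i) = 0 := by
    apply Finset.sum_eq_zero
    intro i _
    rw [hc0 t₁ i, zero_smul]
  rwa [h2, sub_zero] at h1
end
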